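/- Let C ⊆ ℝ^m be a rational polyhedral cone (the set of all nonnegative real linear combinations of a finite set of vectors in ℤ^m) such that C contains no line (C ∩ (−C) = {0}) and C has nonempty topological interior. Then the group of elements of GL(m,ℤ) (integer matrices invertible over ℤ) whose induced linear action on ℝ^m maps C onto C is finite. -/

import Mathlib

/-!
The lattice points of `C` form an additive monoid `L`. Every irreducible element of `L` is either
a generator or a combination of the generators with coefficients in `[0, 1)`, so `L` has finitely
many irreducibles. Since `C` is salient, some integer vector `w` is positive on `C \ {0}`, and
induction on the height `w ⬝ᵥ ξ` shows that the irreducibles generate `L`; as `C` has interior,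
they span `ℝ^m`. An element of the stabilizer preserves `L`, hence permutes its irreducibles, and
is determined by that permutation.
-/

/-- A rational polyhedral cone in `ℝ^m`: the set of all nonnegative real linear
combinations of a finite set of vectors of `ℤ^m`. -/
def IsRatPolyCone (m : ℕ) (C : Set (Fin m → ℝ)) : Prop :=
  ∃ s : Finset (Fin m → ℤ),
    C = {x | ∃ c : (Fin m → ℤ) → ℝ, (∀ v, 0 ≤ c v) ∧
      x = ∑ v ∈ s, c v • (fun i => (v i : ℝ))}

open Set Matrix

namespace AddSubmonoid

variable {M : Type*} [AddCommMonoid M]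

/-- For a pointed saturated affine monoid this is its Hilbert basis. -/
def irreducibles (L : AddSubmonoid M) : Set M :=
  {x | x ∈ L ∧ x ≠ 0 ∧ ∀ y ∈ L, ∀ z ∈ L, x = y + z → y = 0 ∨ z = 0}

theorem le_closure_irreducibles (L : AddSubmonoid M) (h : M →+ ℤ)
    (hpos : ∀ x ∈ L, x ≠ 0 → 0 < h x) : L ≤ closure L.irreducibles := by
  suffices ∀ n : ℕ, ∀ x ∈ L, h x ≤ n → x ∈ closure L.irreducibles from
    fun x hx => this _ x hx (Int.self_le_toNat (h x))
  intro n
  induction n using Nat.strong_induction_on with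
  | _ n ih =>
    intro x hx hle
    by_cases hx0 : x = 0
    · exact hx0 ▸ zero_mem _
    by_cases hirr : x ∈ L.irreducibles
    · exact subset_closure hirr
    obtain ⟨y, hy, z, hz, rfl, hy0, hz0⟩ : ∃ y ∈ L, ∃ z ∈ L, x = y + z ∧ y ≠ 0 ∧ z ≠ 0 := by
      simpa [irreducibles, hx, hx0, not_or] using hirr
    have hhy := hpos y hy hy0
    have hhz := hpos z hz hz0
    rw [map_add] at hle
    exact add_mem (ih (h y).toNat (by omega) y hy (by omega))
      (ih (h z).toNat (by omega) z hz (by omega))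

theorem mapsTo_irreducibles (L : AddSubmonoid M) {f : M →+ M} (hf : Function.Bijective f)
    (hL : ∀ x, f x ∈ L ↔ x ∈ L) : MapsTo f L.irreducibles L.irreducibles := by
  rintro x ⟨hx, hx0, hirr⟩
  refine ⟨(hL x).2 hx, fun h => hx0 (hf.1 (h.trans (map_zero f).symm)), ?_⟩
  intro y hy z hz hyz
  obtain ⟨y, rfl⟩ := hf.2 y
  obtain ⟨z, rfl⟩ := hf.2 z
  rw [← map_add] at hyz
  refine (hirr y ((hL y).1 hy) z ((hL z).1 hz) (hf.1 hyz)).imp ?_ ?_ <;>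
    rintro rfl <;> exact map_zero f

end AddSubmonoid

theorem PointedCone.zero_notMem_convexHull {𝕜 E : Type*} [Field 𝕜] [LinearOrder 𝕜]
    [IsStrictOrderedRing 𝕜] [AddCommGroup E] [Module 𝕜 E] {K : PointedCone 𝕜 E}
    (hK : (K : ConvexCone 𝕜 E).Salient) {T : Finset E} (hT : ∀ t ∈ T, t ∈ K ∧ t ≠ 0) :
    (0 : E) ∉ convexHull 𝕜 (T : Set E) := by
  classical
  intro h0
  obtain ⟨a, ha0, ha1, hsum⟩ := Finset.mem_convexHull'.1 h0
  obtain ⟨t, ht, hat⟩ : ∃ t ∈ T, 0 < a t :=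
    Finset.exists_lt_of_sum_lt (by simp [ha1] : ∑ t ∈ T, (0 : 𝕜) < ∑ t ∈ T, a t)
  rw [← Finset.add_sum_erase _ _ ht] at hsum
  refine hK (a t • t) (K.smul_mem hat.le (hT t ht).1) (smul_ne_zero hat.ne' (hT t ht).2) ?_
  rw [neg_eq_of_add_eq_zero_right hsum]
  exact K.sum_mem fun u hu =>
    K.smul_mem (ha0 u (Finset.mem_of_mem_erase hu)) (hT u (Finset.mem_of_mem_erase hu)).1

section Lattice

variable {ι : Type*}

def castVec : (ι → ℤ) →+ (ι → ℝ) := (Int.castAddHom ℝ).compLeft ι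

@[simp] lemma castVec_apply (ξ : ι → ℤ) (i : ι) : castVec ξ i = ξ i := rfl

lemma castVec_injective : Function.Injective (castVec : (ι → ℤ) → ι → ℝ) :=
  fun _ _ h => funext fun i => Int.cast_injective (congrFun h i)

lemma castVec_eq_zero {ξ : ι → ℤ} : castVec ξ = 0 ↔ ξ = 0 :=
  map_eq_zero_iff _ castVec_injective

lemma castVec_image_closure_subset_span (T : Set (ι → ℤ)) :
    castVec '' (AddSubmonoid.closure T : Set (ι → ℤ)) ⊆ Submodule.span ℝ (castVec '' T) := by
  rw [← AddSubmonoid.coe_map, AddMonoidHom.map_mclosure]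
  exact Submodule.closure_subset_span

def latticePoints (K : PointedCone ℝ (ι → ℝ)) : AddSubmonoid (ι → ℤ) :=
  K.toAddSubmonoid.comap castVec

lemma mem_latticePoints {K : PointedCone ℝ (ι → ℝ)} {ξ : ι → ℤ} :
    ξ ∈ latticePoints K ↔ castVec ξ ∈ K :=
  Iff.rfl

def ratCone (s : Finset (ι → ℤ)) : PointedCone ℝ (ι → ℝ) where
  carrier := {x | ∃ c : (ι → ℤ) → ℝ, (∀ v, 0 ≤ c v) ∧ x = ∑ v ∈ s, c v • castVec v}
  add_mem' := by
    rintro _ _ ⟨c, hc, rfl⟩ ⟨d, hd, rfl⟩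
    exact ⟨c + d, fun v => add_nonneg (hc v) (hd v), by simp [add_smul, Finset.sum_add_distrib]⟩
  zero_mem' := ⟨0, fun _ => le_rfl, by simp⟩
  smul_mem' := by
    rintro a _ ⟨c, hc, rfl⟩
    exact ⟨fun v => a * c v, fun v => mul_nonneg a.2 (hc v), by simp [Finset.smul_sum, mul_smul]⟩

variable {s : Finset (ι → ℤ)}

lemma isRatPolyCone_iff {m : ℕ} {C : Set (Fin m → ℝ)} :
    IsRatPolyCone m C ↔ ∃ s : Finset (Fin m → ℤ), C = ratCone s :=
  Iff.rfl

lemma sub_castVec_mem_ratCone {c : (ι → ℤ) → ℝ} (hc : ∀ v, 0 ≤ c v) {v : ι → ℤ} (hv : v ∈ s)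
    (hcv : 1 ≤ c v) : ∑ u ∈ s, c u • castVec u - castVec v ∈ ratCone s := by
  classical
  refine ⟨c - Pi.single v 1, fun u => ?_, ?_⟩
  · rcases eq_or_ne u v with rfl | huv
    · simpa using hcv
    · simpa [huv] using hc u
  · simp [sub_smul, Finset.sum_sub_distrib, Pi.single_apply, hv]

lemma castVec_mem_ratCone {v : ι → ℤ} (hv : v ∈ s) : castVec v ∈ ratCone s := by
  classical
  refine ⟨Pi.single v 1, fun u => ?_, by simp [Pi.single_apply, ite_smul, hv]⟩
  rw [Pi.single_apply]
  split_ifs <;> norm_num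

lemma ratCone_subset_span :
    (ratCone s : Set (ι → ℝ)) ⊆ Submodule.span ℝ (castVec '' (s : Set (ι → ℤ))) := by
  rintro _ ⟨c, -, rfl⟩
  exact Submodule.sum_mem _ fun v hv =>
    Submodule.smul_mem _ _ (Submodule.subset_span (mem_image_of_mem _ hv))

lemma span_eq_top_of_nonempty_interior_ratCone
    (h : (interior (ratCone s : Set (ι → ℝ))).Nonempty) :
    Submodule.span ℝ (castVec '' (s : Set (ι → ℤ))) = ⊤ :=
  Submodule.eq_top_of_nonempty_interior' _ (h.mono (interior_mono ratCone_subset_span))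

variable [Fintype ι]

lemma castVec_mulVec {κ : Type*} (A : Matrix κ ι ℤ) (ξ : ι → ℤ) :
    castVec (A *ᵥ ξ) = A.map (↑) *ᵥ castVec ξ :=
  funext (RingHom.map_mulVec (Int.castRingHom ℝ) A ξ)

lemma castVec_dotProduct (w ξ : ι → ℤ) :
    ((w ⬝ᵥ ξ : ℤ) : ℝ) = castVec w ⬝ᵥ castVec ξ :=
  RingHom.map_dotProduct (Int.castRingHom ℝ) w ξ

theorem exists_castVec_mem_of_isOpen {U : Set (ι → ℝ)} (hU : IsOpen U)
    (hne : U.Nonempty) (hsmul : ∀ t : ℝ, 0 < t → ∀ x ∈ U, t • x ∈ U) :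
    ∃ ξ : ι → ℤ, castVec ξ ∈ U := by
  obtain ⟨x, hx⟩ := hne
  obtain ⟨ε, hε, hball⟩ := Metric.isOpen_iff.1 hU x hx
  refine ⟨fun i => round (ε⁻¹ * x i), ?_⟩
  have hmem : ε • castVec (fun i => round (ε⁻¹ * x i)) ∈ U := by
    refine hball ((dist_pi_lt_iff hε).2 fun i => ?_)
    obtain ⟨y, hy⟩ : ∃ y, ε⁻¹ * x i = y := ⟨_, rfl⟩
    have hxy : x i = ε * y := by rw [← hy, mul_inv_cancel_left₀ hε.ne']
    rw [Real.dist_eq, Pi.smul_apply, castVec_apply, smul_eq_mul, hy, hxy, ← mul_sub, abs_mul,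
      abs_of_pos hε]
    nlinarith [abs_sub_round y, abs_sub_comm y (round y)]
  simpa [smul_smul, hε.ne'] using hsmul ε⁻¹ (inv_pos.2 hε) _ hmem

theorem Matrix.eq_of_eqOn_mulVec [DecidableEq ι] {κ : Type*} {A B : Matrix κ ι ℤ}
    {T : Set (ι → ℤ)} (hT : Submodule.span ℝ (castVec '' T) = ⊤)
    (h : EqOn (A *ᵥ ·) (B *ᵥ ·) T) : A = B := by
  have : toLin' (A.map ((↑) : ℤ → ℝ)) = toLin' (B.map (↑)) := by
    refine LinearMap.ext_on hT ?_
    rintro _ ⟨ξ, hξ, rfl⟩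
    simp only [toLin'_apply, ← castVec_mulVec, h hξ]
  exact Matrix.map_injective Int.cast_injective (toLin'.injective this)

theorem Matrix.finite_setOf_mapsTo_mulVec [DecidableEq ι] {T : Set (ι → ℤ)} (hfin : T.Finite)
    (hT : Submodule.span ℝ (castVec '' T) = ⊤) :
    {A : Matrix ι ι ℤ | MapsTo (A *ᵥ ·) T T}.Finite := by
  have := hfin.to_subtype
  exact Set.Finite.of_injOn (f := fun A (ξ : T) => A *ᵥ (ξ : ι → ℤ))
    (t := univ.pi fun _ => T) (fun A hA ξ _ => hA ξ.2)
    (fun A _ B _ hAB => eq_of_eqOn_mulVec hT fun ξ hξ => congrFun hAB ⟨ξ, hξ⟩)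
    (Set.Finite.pi fun _ => hfin)

theorem mapsTo_irreducibles_latticePoints [DecidableEq ι] {K : PointedCone ℝ (ι → ℝ)}
    {g : GL ι ℤ} (hg : ((g : Matrix ι ι ℤ).map ((↑) : ℤ → ℝ)).mulVec '' K = K) :
    MapsTo ((g : Matrix ι ι ℤ) *ᵥ ·) (latticePoints K).irreducibles
      (latticePoints K).irreducibles := by
  have hinj : Function.Injective ((g : Matrix ι ι ℤ).map ((↑) : ℤ → ℝ)).mulVec :=
    mulVec_injective_of_isUnit (GeneralLinearGroup.map (Int.castRingHom ℝ) g).isUnit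
  refine (latticePoints K).mapsTo_irreducibles
    (f := (mulVecLin (g : Matrix ι ι ℤ)).toAddMonoidHom)
    ⟨mulVec_injective_of_isUnit g.isUnit, mulVec_surjective_iff_isUnit.2 g.isUnit⟩ fun ξ => ?_
  have hmem := hinj.mem_set_image (s := (K : Set (ι → ℝ))) (a := castVec ξ)
  rwa [hg, ← castVec_mulVec] at hmem

lemma dotProduct_pos_of_mem_ratCone {w : ι → ℝ} (hw : ∀ v ∈ s, v ≠ 0 → 0 < w ⬝ᵥ castVec v)
    {x : ι → ℝ} (hx : x ∈ ratCone s) (hx0 : x ≠ 0) : 0 < w ⬝ᵥ x := by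
  obtain ⟨c, hc, rfl⟩ := hx
  have hterm : ∀ v ∈ s, 0 ≤ c v * (w ⬝ᵥ castVec v) := fun v hv => by
    rcases eq_or_ne v 0 with rfl | hv0
    · simp
    · exact mul_nonneg (hc v) (hw v hv hv0).le
  simp only [dotProduct_sum, dotProduct_smul, smul_eq_mul]
  refine (Finset.sum_nonneg hterm).lt_of_ne fun h0 => hx0 (Finset.sum_eq_zero fun v hv => ?_)
  rcases eq_or_ne v 0 with rfl | hv0
  · simp
  · have := (Finset.sum_eq_zero_iff_of_nonneg hterm).1 h0.symm v hv
    rw [(mul_eq_zero.1 this).resolve_right (hw v hv hv0).ne', zero_smul]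

theorem exists_dotProduct_pos_of_salient (hK : (ratCone s : ConvexCone ℝ (ι → ℝ)).Salient) :
    ∃ w : ι → ℝ, ∀ v ∈ s, v ≠ 0 → 0 < w ⬝ᵥ castVec v := by
  classical
  set T := (s.filter (· ≠ 0)).image castVec
  have hhull : (0 : ι → ℝ) ∉ convexHull ℝ (T : Set (ι → ℝ)) := by
    refine PointedCone.zero_notMem_convexHull hK fun t ht => ?_
    obtain ⟨v, hv, rfl⟩ := Finset.mem_image.1 ht
    rw [Finset.mem_filter] at hv
    exact ⟨castVec_mem_ratCone hv.1, castVec_eq_zero.not.2 hv.2⟩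
  obtain ⟨f, u, hfu, hf⟩ := geometric_hahn_banach_point_closed (convex_convexHull ℝ _)
    (T.finite_toSet.isCompact_convexHull (𝕜 := ℝ)).isClosed hhull
  refine ⟨fun i => f (Pi.single i 1), fun v hv hv0 => ?_⟩
  have hfv : f (castVec v) = (fun i => f (Pi.single i 1)) ⬝ᵥ castVec v := by
    conv_lhs => rw [pi_eq_sum_univ' (castVec v)]
    simp [dotProduct, mul_comm]
  rw [← hfv]
  refine (by simpa using hfu : (0 : ℝ) < u).trans (hf _ (subset_convexHull ℝ _ ?_))
  exact Finset.mem_coe.2 (Finset.mem_image_of_mem _ (Finset.mem_filter.2 ⟨hv, hv0⟩))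

/-- The vectors positive on the nonzero generators form an open cone, so one of them is
integral. -/
theorem exists_int_dotProduct_pos_of_salient (hK : (ratCone s : ConvexCone ℝ (ι → ℝ)).Salient) :
    ∃ w : ι → ℤ, ∀ ξ ∈ latticePoints (ratCone s), ξ ≠ 0 → 0 < w ⬝ᵥ ξ := by
  classical
  obtain ⟨w₀, hw₀⟩ := exists_dotProduct_pos_of_salient hK
  set U := {w : ι → ℝ | ∀ v ∈ s.filter (· ≠ 0), 0 < w ⬝ᵥ castVec v}
  have hU : IsOpen U := by
    simp only [U, ofPred_forall]
    exact isOpen_biInter_finset fun v _ => isOpen_lt continuous_const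
      (continuous_id.dotProduct continuous_const)
  have hw₀U : w₀ ∈ U := fun v hv => hw₀ v (Finset.mem_filter.1 hv).1 (Finset.mem_filter.1 hv).2
  obtain ⟨w, hw⟩ := exists_castVec_mem_of_isOpen hU ⟨w₀, hw₀U⟩ fun t ht x hx v hv => by
    simpa [smul_dotProduct] using mul_pos ht (hx v hv)
  refine ⟨w, fun ξ hξ hξ0 => ?_⟩
  have := dotProduct_pos_of_mem_ratCone (fun v hv hv0 => hw v (Finset.mem_filter.2 ⟨hv, hv0⟩))
    hξ (castVec_eq_zero.not.2 hξ0)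
  exact_mod_cast (castVec_dotProduct w ξ).symm ▸ this

lemma abs_le_of_mem_irreducibles_latticePoints_ratCone {ξ : ι → ℤ}
    (hξ : ξ ∈ (latticePoints (ratCone s)).irreducibles) (i : ι) : |ξ i| ≤ ∑ v ∈ s, |v i| := by
  obtain ⟨⟨c, hc, hξc⟩, -, hirr⟩ := hξ
  -- a generator with coefficient at least one splits off, so it is all of `ξ`
  by_cases hbig : ∃ v ∈ s, v ≠ 0 ∧ 1 ≤ c v
  · obtain ⟨v, hv, hv0, hcv⟩ := hbig
    have hsub : ξ - v ∈ latticePoints (ratCone s) := by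
      rw [mem_latticePoints, map_sub, hξc]
      exact sub_castVec_mem_ratCone hc hv hcv
    obtain rfl : ξ = v := by
      rcases hirr v (castVec_mem_ratCone hv) (ξ - v) hsub (by abel) with h | h
      · exact absurd h hv0
      · exact sub_eq_zero.1 h
    exact Finset.single_le_sum (f := fun u : ι → ℤ => |u i|) (fun u _ => abs_nonneg _) hv
  · push Not at hbig
    have hξi : (ξ i : ℝ) = ∑ v ∈ s, c v * v i := by
      simpa using congrFun hξc i
    have : |(ξ i : ℝ)| ≤ ∑ v ∈ s, |(v i : ℝ)| := by
      rw [hξi]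
      refine (Finset.abs_sum_le_sum_abs _ _).trans (Finset.sum_le_sum fun v hv => ?_)
      rcases eq_or_ne v 0 with rfl | hv0
      · simp
      · rw [abs_mul, abs_of_nonneg (hc v)]
        exact mul_le_of_le_one_left (abs_nonneg _) (hbig v hv hv0).le
    exact_mod_cast this

theorem finite_irreducibles_latticePoints_ratCone (s : Finset (ι → ℤ)) :
    (latticePoints (ratCone s)).irreducibles.Finite :=
  (Set.Finite.pi fun i => Set.finite_Icc (-∑ v ∈ s, |v i|) (∑ v ∈ s, |v i|)).subset
    fun _ hξ i _ => abs_le.1 (abs_le_of_mem_irreducibles_latticePoints_ratCone hξ i)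

end Lattice

theorem stabilizer_of_salient_cone_finite_general (m : ℕ)
    (C : Set (Fin m → ℝ)) (hC : IsRatPolyCone m C)
    (hline : C ∩ (-C) = {0})
    (hint : (interior C).Nonempty) :
    {g : Matrix.GeneralLinearGroup (Fin m) ℤ |
      (((g : Matrix (Fin m) (Fin m) ℤ).map (fun z : ℤ => (z : ℝ))).mulVec) '' C
        = C}.Finite := by
  obtain ⟨s, rfl⟩ := isRatPolyCone_iff.1 hC
  set L := latticePoints (ratCone s)
  obtain ⟨w, hw⟩ := exists_int_dotProduct_pos_of_salient
    ((ratCone s).salient_iff_inter_neg_eq_singleton.2 hline)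
  have hgen : L ≤ AddSubmonoid.closure L.irreducibles :=
    L.le_closure_irreducibles (AddMonoidHom.mk' (w ⬝ᵥ ·) (dotProduct_add w)) hw
  have hspan : Submodule.span ℝ (castVec '' L.irreducibles) = ⊤ := by
    refine eq_top_iff.2 ((span_eq_top_of_nonempty_interior_ratCone hint).ge.trans ?_)
    refine Submodule.span_le.2 ((image_mono fun v hv => ?_).trans
      (castVec_image_closure_subset_span _))
    exact hgen (castVec_mem_ratCone hv)
  exact ((finite_setOf_mapsTo_mulVec (finite_irreducibles_latticePoints_ratCone s) hspan).preimage
    Units.val_injective.injOn).subset fun g hg => mapsTo_irreducibles_latticePoints hg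

/-- The group of elements of `GL(m,ℤ)` preserving a rational polyhedral cone that
contains no line and has nonempty interior is finite. -/
theorem stabilizer_of_salient_cone_finite (m : ℕ) (hm : 1 ≤ m)
    (C : Set (Fin m → ℝ)) (hC : IsRatPolyCone m C)
    (hline : C ∩ (-C) = {0})
    (hint : (interior C).Nonempty) :
    {g : Matrix.GeneralLinearGroup (Fin m) ℤ |
      (((g : Matrix (Fin m) (Fin m) ℤ).map (fun z : ℤ => (z : ℝ))).mulVec) '' C
        = C}.Finite :=
  stabilizer_of_salient_cone_finite_general m C hC hline hint
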